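/- Unit propagation soundness for QBF with existential units: let Φ = Q₁x₁…Qₙxₙ.φ be a QBF in CNF containing a unit clause (ℓ) whose variable x is existentially quantified. Then Φ is true if and only if the QBF obtained by deleting x from the prefix and substituting into φ the value making ℓ true is true. -/

import Mathlib

inductive Quant | ex | all

/-- QBF semantics over named variables: the prefix is a list of
(variable, quantifier) pairs (outermost first); `τ` is the ambient assignment,
updated as the prefix is consumed; the matrix is a predicate on assignments. -/
def QTrueL {V : Type*} [DecidableEq V] :
    List (V × Quant) → ((V → Bool) → Prop) → (V → Bool) → Prop
  | [], φ, τ => φ τ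
  | (x, Quant.ex) :: qs, φ, τ =>
      QTrueL qs φ (Function.update τ x false) ∨ QTrueL qs φ (Function.update τ x true)
  | (x, Quant.all) :: qs, φ, τ =>
      QTrueL qs φ (Function.update τ x false) ∧ QTrueL qs φ (Function.update τ x true)

/-- An assignment satisfies a CNF (a finite set of clauses, each a finite set of
literals given as (variable, polarity) pairs) iff every clause has a true literal. -/
def CnfSat {V : Type*} (φ : Finset (Finset (V × Bool))) (τ : V → Bool) : Prop :=
  ∀ C ∈ φ, ∃ l ∈ C, τ l.1 = l.2

/-!
A unit clause `(x, p)` is falsified as soon as `x := !p`, so the existential branch `x := !p`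
can never succeed and the quantifier on `x` collapses to the single instantiation `x := p`.
Since no other quantifier binds `x`, that instantiation commutes with the rest of the prefix and
can be pushed into the matrix, where it is exactly the syntactic substitution on the CNF.
-/

section QTrueL

variable {V : Type*} [DecidableEq V]

theorem qTrueL_congr (qs : List (V × Quant)) {ψ ψ' : (V → Bool) → Prop}
    (h : ∀ σ, ψ σ ↔ ψ' σ) (τ : V → Bool) : QTrueL qs ψ τ ↔ QTrueL qs ψ' τ := by
  induction qs generalizing τ with
  | nil => exact h τ
  | cons yq qs ih =>
    obtain ⟨y, q⟩ := yq
    cases q <;> simp only [QTrueL] <;> rw [ih, ih]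

theorem qTrueL_append (pre qs : List (V × Quant)) (ψ : (V → Bool) → Prop) (τ : V → Bool) :
    QTrueL (pre ++ qs) ψ τ ↔ QTrueL pre (QTrueL qs ψ) τ := by
  induction pre generalizing τ with
  | nil => rfl
  | cons yq pre ih =>
    obtain ⟨y, q⟩ := yq
    cases q <;> simp only [List.cons_append, QTrueL] <;> rw [ih, ih]

theorem exists_of_qTrueL {qs : List (V × Quant)} {ψ : (V → Bool) → Prop} {τ : V → Bool}
    (h : QTrueL qs ψ τ) : ∃ σ, ψ σ := by
  induction qs generalizing τ with
  | nil => exact ⟨τ, h⟩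
  | cons yq qs ih =>
    obtain ⟨y, q⟩ := yq
    cases q
    · rcases h with h | h <;> exact ih h
    · exact ih h.1

theorem qTrueL_update_of_not_mem {qs : List (V × Quant)} {x : V} (hx : x ∉ qs.map Prod.fst)
    (ψ : (V → Bool) → Prop) (b : Bool) (τ : V → Bool) :
    QTrueL qs ψ (Function.update τ x b) ↔
      QTrueL qs (fun σ => ψ (Function.update σ x b)) τ := by
  induction qs generalizing τ with
  | nil => rfl
  | cons yq qs ih =>
    obtain ⟨y, q⟩ := yq
    simp only [List.map_cons, List.mem_cons, not_or] at hx
    have hcomm (c : Bool) (τ : V → Bool) :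
        Function.update (Function.update τ x b) y c =
          Function.update (Function.update τ y c) x b :=
      Function.update_comm hx.1 b c τ
    cases q <;> simp only [QTrueL] <;> rw [hcomm, hcomm, ih hx.2, ih hx.2]

theorem qTrueL_ex_cons_iff_of_forced {qs : List (V × Quant)} {x : V}
    (hx : x ∉ qs.map Prod.fst) {ψ : (V → Bool) → Prop} {p : Bool}
    (hforced : ∀ σ, ¬ ψ (Function.update σ x (!p))) (τ : V → Bool) :
    QTrueL ((x, Quant.ex) :: qs) ψ τ ↔
      QTrueL qs (fun σ => ψ (Function.update σ x p)) τ := by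
  have hdead : ¬ QTrueL qs ψ (Function.update τ x (!p)) := fun h => by
    obtain ⟨σ, hσ⟩ := exists_of_qTrueL ((qTrueL_update_of_not_mem hx ψ _ τ).1 h)
    exact hforced σ hσ
  rw [QTrueL, ← qTrueL_update_of_not_mem hx ψ p τ]
  cases p <;> simp only [Bool.not_false, Bool.not_true] at hdead <;> simp [hdead]

end QTrueL

section CnfSat

variable {V : Type*} [DecidableEq V]

theorem not_cnfSat_update_of_unit {φ : Finset (Finset (V × Bool))} {x : V} {p : Bool}
    (hunit : {(x, p)} ∈ φ) (σ : V → Bool) : ¬ CnfSat φ (Function.update σ x (!p)) := by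
  intro h
  obtain ⟨l, hl, hlv⟩ := h _ hunit
  rw [Finset.mem_singleton] at hl
  subst hl
  simp at hlv

theorem cnfSat_update_iff (φ : Finset (Finset (V × Bool))) (x : V) (p : Bool) (σ : V → Bool) :
    CnfSat φ (Function.update σ x p) ↔
      CnfSat ((φ.filter (fun C => (x, p) ∉ C)).image
        (fun C => C.filter (fun l => l.1 ≠ x))) σ := by
  constructor
  · rintro h _ hC'
    obtain ⟨C, ⟨hCφ, hxp⟩, rfl⟩ := by simpa only [Finset.mem_image, Finset.mem_filter] using hC'
    obtain ⟨l, hl, hlv⟩ := h C hCφ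
    have hlx : l.1 ≠ x := by
      rintro hlx
      rw [hlx, Function.update_self] at hlv
      exact hxp ((Prod.ext hlx hlv.symm : l = (x, p)) ▸ hl)
    exact ⟨l, Finset.mem_filter.2 ⟨hl, hlx⟩, by rwa [Function.update_of_ne hlx] at hlv⟩
  · intro h C hC
    by_cases hxp : (x, p) ∈ C
    · exact ⟨(x, p), hxp, by simp⟩
    · obtain ⟨l, hl, hlv⟩ := h (C.filter (fun l => l.1 ≠ x))
        (Finset.mem_image.2 ⟨C, Finset.mem_filter.2 ⟨hC, hxp⟩, rfl⟩)
      rw [Finset.mem_filter] at hl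
      exact ⟨l, hl.1, by rwa [Function.update_of_ne hl.2]⟩

end CnfSat

/-- Unit propagation soundness for existential unit clauses: if a CNF QBF has a
unit clause with literal `(x, p)` where `x` is existentially quantified (and
`x` occurs nowhere else in the prefix), then the QBF is true iff the QBF
obtained by deleting `x` from the prefix and substituting `x := p` into the
matrix (removing satisfied clauses and falsified literals) is true. -/
theorem stmt_18 {V : Type*} [DecidableEq V] (pre post : List (V × Quant))
    (x : V) (p : Bool) (φ : Finset (Finset (V × Bool)))
    (hunit : ({(x, p)} : Finset (V × Bool)) ∈ φ)
    (hx : x ∉ (pre ++ post).map Prod.fst)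
    (τ : V → Bool) :
    QTrueL (pre ++ (x, Quant.ex) :: post) (CnfSat φ) τ ↔
    QTrueL (pre ++ post)
      (CnfSat ((φ.filter (fun C => (x, p) ∉ C)).image
        (fun C => C.filter (fun l => l.1 ≠ x)))) τ := by
  have hx_post : x ∉ post.map Prod.fst := fun h => hx (by simp_all)
  rw [qTrueL_append, qTrueL_append]
  refine qTrueL_congr pre (fun σ => ?_) τ
  rw [qTrueL_ex_cons_iff_of_forced hx_post (not_cnfSat_update_of_unit hunit)]
  exact qTrueL_congr post (cnfSat_update_iff φ x p) σ
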